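/- arXiv:1107.1858 — 2 statements merged into one kernel-verified Lean document; each statement's English description precedes it below -/
import Mathlib

section
/- For all adjacent vertices x and y of G, every natural number t and every vertex z, the coordinate r_t(x,y)(z) is non-negative. -/
open scoped Classical

/-- `Φ⁻ₓ`: apply the reflection at every vertex at odd distance from `x`. -/
noncomputable def phiOdd {V : Type*} (G : SimpleGraph V) (x : V) (a : V → ℤ) : V → ℤ :=
  fun z => if Odd (G.dist x z) then -a z + ∑ᶠ w ∈ G.neighborSet z, a w else a z

/-- `Φ⁺ₓ`: apply the reflection at every vertex at even distance from `x`. -/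
noncomputable def phiEven {V : Type*} (G : SimpleGraph V) (x : V) (a : V → ℤ) : V → ℤ :=
  fun z => if Even (G.dist x z) then -a z + ∑ᶠ w ∈ G.neighborSet z, a w else a z

/-- The Fibonacci vectors `s_t(x)`: `s_0(x) = δ_x`, `s_{t+1}(x) = Φ⁻ₓ s_t(x)` for even `t`
and `s_{t+1}(x) = Φ⁺ₓ s_t(x)` for odd `t`. -/
noncomputable def sVec {V : Type*} (G : SimpleGraph V) (x : V) : ℕ → V → ℤ
  | 0 => fun z => if z = x then 1 else 0
  | t + 1 => if Even t then phiOdd G x (sVec G x t) else phiEven G x (sVec G x t)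

/-- The Fibonacci vectors `r_t(x,y)`: `r_0(x,y) = δ_x + δ_y`, `r_{t+1}(x,y) = Φ⁻ₓ r_t(x,y)`
for even `t` and `r_{t+1}(x,y) = Φ⁺ₓ r_t(x,y)` for odd `t`. -/
noncomputable def rVec {V : Type*} (G : SimpleGraph V) (x y : V) : ℕ → V → ℤ
  | 0 => fun z => (if z = x then 1 else 0) + (if z = y then 1 else 0)
  | t + 1 => if Even t then phiOdd G x (rVec G x y t) else phiEven G x (rVec G x y t)

/-!
Every vertex `z` is one step further from one endpoint of the edge `xy` than from the other.
Folding the tree onto `ℤ` (the `x`-side onto `0, -1, -2, …` by `-dist x z`, the `y`-side onto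
`1, 2, 3, …` by `dist x z`) sends the three neighbours of each vertex to one inner and two outer
neighbours, so `r_t(x,y)` is pulled back from a vector on `ℤ` evolving by the same alternating
reflections with weights `1` and `2`. There non-negativity propagates because every coordinate
about to be reflected is, away from the centre, at most half of its inner neighbour; near the
centre a few inequalities among the coordinates `-2, …, 1` take the place of this bound.
-/

lemma Set.finsum_mem_eq_add_nsmul {α M : Type*} [AddCommMonoid M] {s : Set α} {p : α} {n : ℕ}
    {f : α → M} {c : M} (hs : s.ncard = n + 1) (hp : p ∈ s) (hc : ∀ w ∈ s, w ≠ p → f w = c) :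
    ∑ᶠ w ∈ s, f w = f p + n • c := by
  have hfin : (s \ {p}).Finite := (Set.finite_of_ncard_ne_zero (by omega)).sdiff
  rw [← Set.insert_eq_of_mem hp, ← Set.insert_sdiff_singleton,
    finsum_mem_insert f (fun h => h.2 rfl) hfin, finsum_mem_eq_finite_toFinset_sum _ hfin,
    Finset.sum_congr rfl (g := fun _ => c) (by simpa using fun w hw hne => hc w hw hne),
    Finset.sum_const, ← Set.ncard_eq_toFinset_card _ hfin, Set.ncard_sdiff_singleton_of_mem hp, hs,
    Nat.add_sub_cancel]

lemma rVec_succ_apply {V : Type*} (G : SimpleGraph V) (x y : V) (t : ℕ) (z : V) :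
    rVec G x y (t + 1) z = if Odd (G.dist x z + t)
      then -rVec G x y t z + ∑ᶠ w ∈ G.neighborSet z, rVec G x y t w else rVec G x y t z := by
  rcases Nat.even_or_odd t with ht | ht
  · have h : Odd (G.dist x z + t) ↔ Odd (G.dist x z) := by simp [Nat.odd_add, ht]
    simp only [rVec, if_pos ht, phiOdd, h]
  · have h : Odd (G.dist x z + t) ↔ Even (G.dist x z) := by
      simp [Nat.odd_add, Nat.not_even_iff_odd.2 ht]
    simp only [rVec, if_neg (Nat.not_even_iff_odd.2 ht), phiEven, h]

namespace SimpleGraph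

variable {V : Type*} {G : SimpleGraph V}

lemma Connected.exists_adj_dist_add_one_eq (hG : G.Connected) {r z : V} (hz : z ≠ r) :
    ∃ w, G.Adj z w ∧ G.dist r w + 1 = G.dist r z := by
  obtain ⟨p, -, hp⟩ := hG.exists_path_of_dist z r
  have hnil : ¬p.Nil := Walk.not_nil_of_ne hz
  refine ⟨p.snd, p.adj_snd hnil, le_antisymm ?_ ?_⟩
  · rw [dist_comm, dist_comm (u := r), ← hp, ← Walk.length_tail_add_one hnil]
    exact Nat.add_le_add_right (dist_le _) 1
  · calc G.dist r z ≤ G.dist r p.snd + G.dist p.snd z := hG.dist_triangle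
      _ = G.dist r p.snd + 1 := by rw [dist_eq_one_iff_adj.2 (p.adj_snd hnil).symm]

lemma IsTree.eq_of_adj_of_dist_add_one_eq (hG : G.IsTree) {r z w₁ w₂ : V}
    (h₁ : G.Adj z w₁) (h₂ : G.Adj z w₂)
    (hd₁ : G.dist r w₁ + 1 = G.dist r z) (hd₂ : G.dist r w₂ + 1 = G.dist r z) : w₁ = w₂ := by
  obtain ⟨p, hp, hpl⟩ := hG.connected.exists_path_of_dist r z
  have key : ∀ w, G.Adj z w → G.dist r w + 1 = G.dist r z → w = p.penultimate := by
    intro w hw hd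
    obtain ⟨q, -, hql⟩ := hG.connected.exists_path_of_dist r w
    have hqz : (q.concat hw.symm).IsPath :=
      Walk.isPath_of_length_eq_dist _ (by rw [Walk.length_concat, hql, hd])
    have := (hG.isAcyclic.subsingleton_path r z).elim ⟨_, hqz⟩ ⟨p, hp⟩
    rw [← Walk.penultimate_concat q hw.symm]
    exact congrArg (fun q : G.Path r z => q.1.penultimate) this
  rw [key w₁ h₁ hd₁, key w₂ h₂ hd₂]

lemma IsTree.dist_eq_add_one_of_adj_of_ne (hG : G.IsTree) {r z w₀ w : V} (hw₀ : G.Adj z w₀)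
    (hd₀ : G.dist r w₀ + 1 = G.dist r z) (hw : G.Adj z w) (hne : w ≠ w₀) :
    G.dist r w = G.dist r z + 1 :=
  (hG.dist_eq_dist_add_one_of_adj r hw).resolve_left
    fun h => hne (hG.eq_of_adj_of_dist_add_one_eq hw hw₀ h.symm hd₀)

lemma IsTree.dist_eq_add_one_or_of_adj (hG : G.IsTree) {a b : V} (hab : G.Adj a b) (u : V) :
    G.dist a u = G.dist b u + 1 ∨ G.dist b u = G.dist a u + 1 := by
  rw [dist_comm (u := a), dist_comm (u := b)]
  exact hG.dist_eq_dist_add_one_of_adj u hab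

lemma IsTree.exists_adj_of_dist_eq_add_one (hG : G.IsTree) {a b z : V} (hab : G.Adj a b)
    (hz : G.dist b z = G.dist a z + 1) :
    ∃ w₀, G.Adj z w₀ ∧ G.dist b w₀ + 1 = G.dist b z ∧
      (G.dist a w₀ + 1 = G.dist a z ∨ G.dist a z = 0 ∧ G.dist a w₀ = 1) ∧
      ∀ w, G.Adj z w → w ≠ w₀ → G.dist a w = G.dist a z + 1 ∧ G.dist b w = G.dist b z + 1 := by
  have hzb : z ≠ b := by rintro rfl; simp at hz
  obtain ⟨w₀, hw₀, hd₀⟩ := hG.connected.exists_adj_dist_add_one_eq hzb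
  have outer (w : V) (hw : G.Adj z w) (hne : w ≠ w₀) :
      G.dist a w = G.dist a z + 1 ∧ G.dist b w = G.dist b z + 1 := by
    have := hG.dist_eq_add_one_of_adj_of_ne hw₀ hd₀ hw hne
    have := hG.dist_eq_add_one_or_of_adj hab w
    have := hG.dist_eq_dist_add_one_of_adj a hw
    omega
  refine ⟨w₀, hw₀, hd₀, ?_, outer⟩
  have := hG.dist_eq_add_one_or_of_adj hab w₀
  rcases hG.dist_eq_dist_add_one_of_adj a hw₀ with h | h
  · exact .inl h.symm
  · have hz0 : G.dist a z = 0 := by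
      by_contra hz0
      obtain ⟨p, hp, hdp⟩ := hG.connected.exists_adj_dist_add_one_eq (r := a) (z := z)
        (by rintro rfl; simp at hz0)
      have := (outer p hp (by rintro rfl; omega)).1
      omega
    exact .inr ⟨hz0, by omega⟩

end SimpleGraph

namespace FibonacciLine

def inward (m : ℤ) : ℤ := if m ≤ 0 then m + 1 else m - 1

def outward (m : ℤ) : ℤ := if m ≤ 0 then m - 1 else m + 1

/-- Read through `fold`, whose parity is that of `dist x z`, this is `Φ⁻ₓ` for even `t` and
`Φ⁺ₓ` for odd `t`. -/
def step (t : ℕ) (F : ℤ → ℤ) (m : ℤ) : ℤ :=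
  if Odd (m + t) then -F m + F (inward m) + 2 * F (outward m) else F m

def vec : ℕ → ℤ → ℤ
  | 0 => fun m => (if m = 0 then 1 else 0) + (if m = 1 then 1 else 0)
  | t + 1 => step t (vec t)

lemma step_of_odd {t : ℕ} {F : ℤ → ℤ} {m : ℤ} (h : (m + t) % 2 = 1) :
    step t F m = -F m + F (inward m) + 2 * F (outward m) :=
  if_pos (Int.odd_iff.2 h)

lemma step_of_even {t : ℕ} {F : ℤ → ℤ} {m : ℤ} (h : (m + t) % 2 = 0) : step t F m = F m :=
  if_neg (Int.not_odd_iff.2 h)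

lemma outward_inward {m : ℤ} (hm : m ≤ -1 ∨ 2 ≤ m) : outward (inward m) = m := by
  simp only [inward, outward]; split_ifs <;> omega

structure Invariant (t : ℕ) (F : ℤ → ℤ) : Prop where
  nonneg : ∀ m : ℤ, 0 ≤ F m
  two_mul_le_inward : ∀ m : ℤ, (m + t) % 2 = 1 → (m ≤ -2 ∨ 2 ≤ m) → 2 * F m ≤ F (inward m)
  centre_of_even : t % 2 = 0 → F 1 ≤ F 0 ∧ F (-1) ≤ F 0 ∧ F (-1) ≤ 2 * F (-2)
  centre_of_odd : t % 2 = 1 → F 0 ≤ F 1 + F (-1) ∧ F 0 ≤ 2 * F (-1)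

lemma invariant_vec_zero : Invariant 0 (vec 0) where
  nonneg m := by simp only [vec]; split_ifs <;> omega
  two_mul_le_inward m _ hm := by simp only [vec, inward]; split_ifs <;> omega
  centre_of_even _ := by simp [vec]
  centre_of_odd h := absurd h (by decide)

namespace Invariant

variable {t : ℕ} {F : ℤ → ℤ} (hF : Invariant t F)
include hF

lemma le_inward {m : ℤ} (h : (m + t) % 2 = 1) (hm : m ≠ 0) : F m ≤ F (inward m) := by
  have := hF.nonneg m
  rcases (show m ≤ -2 ∨ 2 ≤ m ∨ m = -1 ∨ m = 1 by omega) with hm | hm | rfl | rfl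
  · have := hF.two_mul_le_inward m h (.inl hm); omega
  · have := hF.two_mul_le_inward m h (.inr hm); omega
  · exact (hF.centre_of_even (by omega)).2.1
  · exact (hF.centre_of_even (by omega)).1

lemma step_nonneg (m : ℤ) : 0 ≤ step t F m := by
  rcases Int.emod_two_eq_zero_or_one (m + t) with h | h
  · rw [step_of_even h]; exact hF.nonneg m
  · rw [step_of_odd h]
    have := hF.nonneg (outward m)
    by_cases hm : m = 0
    · subst hm
      have := hF.centre_of_odd (by omega)
      norm_num [inward, outward] at *
      omega
    · have := hF.le_inward h hm; omega

lemma two_mul_le_inward_step (m : ℤ) (hm : (m + ↑(t + 1)) % 2 = 1) (hm2 : m ≤ -2 ∨ 2 ≤ m) :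
    2 * step t F m ≤ step t F (inward m) := by
  have hin : (inward m + t) % 2 = 1 := by simp only [inward]; split_ifs <;> omega
  rw [step_of_even (by push_cast at hm; omega), step_of_odd hin, outward_inward (by omega)]
  have := hF.le_inward hin (by simp only [inward]; split_ifs <;> omega)
  omega

lemma centre_of_even_step (ht : (t + 1) % 2 = 0) :
    step t F 1 ≤ step t F 0 ∧ step t F (-1) ≤ step t F 0 ∧ step t F (-1) ≤ 2 * step t F (-2) := by
  obtain ⟨h0, h1⟩ := hF.centre_of_odd (by omega)
  have h2 := hF.two_mul_le_inward (-2) (by omega) (.inl le_rfl)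
  have := hF.nonneg (-3)
  rw [step_of_even (by omega), step_of_odd (by omega), step_of_even (by omega),
    step_of_odd (by omega)]
  norm_num [inward, outward] at *
  omega

lemma centre_of_odd_step (ht : (t + 1) % 2 = 1) :
    step t F 0 ≤ step t F 1 + step t F (-1) ∧ step t F 0 ≤ 2 * step t F (-1) := by
  obtain ⟨h1, h2, h3⟩ := hF.centre_of_even (by omega)
  have := hF.nonneg 2
  have := hF.nonneg (-2)
  rw [step_of_even (by omega), step_of_odd (by omega), step_of_odd (by omega)]
  norm_num [inward, outward]
  omega

lemma step : Invariant (t + 1) (step t F) :=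
  ⟨hF.step_nonneg, hF.two_mul_le_inward_step, hF.centre_of_even_step, hF.centre_of_odd_step⟩

end Invariant

lemma invariant_vec (t : ℕ) : Invariant t (vec t) := by
  induction t with
  | zero => exact invariant_vec_zero
  | succ t ih => exact ih.step

lemma vec_nonneg (t : ℕ) (m : ℤ) : 0 ≤ vec t m := (invariant_vec t).nonneg m

variable {V : Type*} {G : SimpleGraph V} {x y : V}

noncomputable def fold (G : SimpleGraph V) (x y z : V) : ℤ :=
  if G.dist x z < G.dist y z then -(G.dist x z : ℤ) else G.dist x z

lemma odd_fold_add_iff (z : V) (t : ℕ) : Odd (fold G x y z + t) ↔ Odd (G.dist x z + t) := by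
  unfold fold; split_ifs <;> simp [Int.odd_add, Nat.odd_add]

lemma exists_adj_fold (hG : G.IsTree) (hxy : G.Adj x y) (z : V) :
    ∃ w₀, G.Adj z w₀ ∧ fold G x y w₀ = inward (fold G x y z) ∧
      ∀ w, G.Adj z w → w ≠ w₀ → fold G x y w = outward (fold G x y z) := by
  rcases hG.dist_eq_add_one_or_of_adj hxy z with hz | hz
  · obtain ⟨w₀, hw₀, hd₀, hin, hout⟩ := hG.exists_adj_of_dist_eq_add_one hxy.symm hz
    refine ⟨w₀, hw₀, ?_, fun w hw hne => ?_⟩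
    · simp only [fold, inward]; split_ifs <;> omega
    · have := hout w hw hne; simp only [fold, outward]; split_ifs <;> omega
  · obtain ⟨w₀, hw₀, hd₀, hin, hout⟩ := hG.exists_adj_of_dist_eq_add_one hxy hz
    refine ⟨w₀, hw₀, ?_, fun w hw hne => ?_⟩
    · simp only [fold, inward]; split_ifs <;> omega
    · have := hout w hw hne; simp only [fold, outward]; split_ifs <;> omega

lemma rVec_eq_vec_fold (hG : G.IsTree) (hreg : ∀ v : V, (G.neighborSet v).ncard = 3)
    (hxy : G.Adj x y) (t : ℕ) (z : V) : rVec G x y t z = vec t (fold G x y z) := by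
  induction t generalizing z with
  | zero =>
    have := hG.dist_eq_add_one_or_of_adj hxy z
    have hx : fold G x y z = 0 ↔ z = x := by
      rw [eq_comm (a := z), ← hG.connected.dist_eq_zero_iff, fold]; split_ifs <;> omega
    have hy : fold G x y z = 1 ↔ z = y := by
      rw [eq_comm (a := z), ← hG.connected.dist_eq_zero_iff, fold]; split_ifs <;> omega
    simp only [rVec, vec, hx, hy]
  | succ t ih =>
    obtain ⟨w₀, hw₀, hin, hout⟩ := exists_adj_fold hG hxy z
    have hsum : ∑ᶠ w ∈ G.neighborSet z, rVec G x y t w =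
        vec t (inward (fold G x y z)) + 2 * vec t (outward (fold G x y z)) := by
      rw [Set.finsum_mem_eq_add_nsmul (c := vec t (outward (fold G x y z))) (hreg z) hw₀
        fun w hw hne => by rw [ih, hout w hw hne], ih, hin, nsmul_eq_mul, Nat.cast_ofNat]
    rw [rVec_succ_apply, hsum, ih, vec, step]
    simp only [odd_fold_add_iff, add_assoc]

end FibonacciLine

/-- The coordinates of the Fibonacci vector `r_t(x,y)` are non-negative. -/
theorem rVec_nonneg (V : Type*) (G : SimpleGraph V) (hconn : G.Connected)
    (hacyc : G.IsAcyclic) (hreg : ∀ v : V, (G.neighborSet v).ncard = 3)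
    (x y : V) (hxy : G.Adj x y) (t : ℕ) (z : V) :
    0 ≤ rVec G x y t z := by
  rw [FibonacciLine.rVec_eq_vec_fold ⟨hconn, hacyc⟩ hreg hxy]
  exact FibonacciLine.vec_nonneg t _
end

section
/- For every vertex x of G and every natural number t, the sum of the coordinates s_t(x)(z) over all vertices z with d(x,z) ≡ t (mod 2) equals the Fibonacci number f(2t+2). -/
open scoped Classical

/-!
Write `A_t` and `B_t` for the sums of `s_t(x)` over the vertices whose distance from `x` has
the parity of `t` and of `t + 1` respectively. The step `s_t ↦ s_{t+1}` reflects exactly the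
vertices of parity `t + 1`. The tree is bipartite with the two parity classes as sides and is
3-regular, so counting the edges between the classes gives `A_{t+1} = 3 A_t - B_t`, while
`B_{t+1} = A_t` because that class is left untouched. The even-index Fibonacci numbers obey the
same recurrence `f(n+4) = 3 f(n+2) - f(n)`, and `A_0 = 1 = f(2)`, `B_0 = 0 = f(0)`.
-/

namespace SimpleGraph

variable {V : Type*} {G : SimpleGraph V}

noncomputable def reflectOn (G : SimpleGraph V) (S : Set V) (a : V → ℤ) : V → ℤ :=
  fun z => if z ∈ S then -a z + ∑ᶠ w ∈ G.neighborSet z, a w else a z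

lemma finsum_mem_reflectOn_of_disjoint {S T : Set V} (hST : Disjoint S T) (a : V → ℤ) :
    ∑ᶠ z ∈ T, G.reflectOn S a z = ∑ᶠ z ∈ T, a z :=
  finsum_mem_congr rfl fun _ hz => if_neg (hST.notMem_of_mem_right hz)

section LocallyFinite

variable [G.LocallyFinite]

lemma finsum_mem_neighborSet_eq_sum (a : V → ℤ) (z : V) :
    ∑ᶠ w ∈ G.neighborSet z, a w = ∑ w ∈ G.neighborFinset z, a w := by
  rw [← coe_neighborFinset, finsum_mem_coe_finset]

lemma hasFiniteSupport_finsum_mem_neighborSet {a : V → ℤ} (ha : a.HasFiniteSupport) :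
    (fun z => ∑ᶠ w ∈ G.neighborSet z, a w).HasFiniteSupport := by
  refine (ha.biUnion fun w _ => (G.neighborSet w).toFinite).subset fun z hz => ?_
  obtain ⟨w, hwz, hw⟩ := exists_ne_zero_of_finsum_mem_ne_zero hz
  exact Set.mem_biUnion hw (G.mem_neighborSet w z |>.mpr (G.adj_symm hwz))

lemma hasFiniteSupport_reflectOn (S : Set V) {a : V → ℤ} (ha : a.HasFiniteSupport) :
    (G.reflectOn S a).HasFiniteSupport := by
  refine ((ha.neg.add (hasFiniteSupport_finsum_mem_neighborSet (G := G) ha)).union ha).subset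
    fun z hz => ?_
  by_cases hzS : z ∈ S
  · left; simpa [reflectOn, hzS] using hz
  · right; simpa [reflectOn, hzS] using hz

lemma IsBipartiteWith.finsum_mem_finsum_mem_neighborSet {S T : Set V} (h : G.IsBipartiteWith S T)
    {a : V → ℤ} (ha : a.HasFiniteSupport) :
    ∑ᶠ z ∈ S, ∑ᶠ w ∈ G.neighborSet z, a w = ∑ᶠ w ∈ T, G.degree w * a w := by
  set s := ha.toFinset
  have hs {w : V} (hw : a w ≠ 0) : w ∈ s := (Set.Finite.mem_toFinset ha).mpr hw
  have hT : ∀ {z w}, z ∈ S → G.Adj z w → w ∈ T := fun hz hzw =>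
    ((h.mem_of_adj hzw).resolve_right fun h' => h.disjoint.notMem_of_mem_left hz h'.1).2
  have hS : ∀ {z w}, w ∈ T → G.Adj z w → z ∈ S := fun hw hzw =>
    ((h.mem_of_adj hzw).resolve_right fun h' => h.disjoint.notMem_of_mem_right hw h'.2).1
  set U := (s.biUnion fun w => G.neighborFinset w).filter (· ∈ S)
  calc ∑ᶠ z ∈ S, ∑ᶠ w ∈ G.neighborSet z, a w
      = ∑ z ∈ U, ∑ w ∈ G.neighborFinset z, a w := by
        simp_rw [finsum_mem_neighborSet_eq_sum]
        refine finsum_mem_eq_sum_of_subset _ (fun z ⟨hzS, hz⟩ => ?_)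
          fun z hz => (Finset.mem_filter.mp hz).2
        obtain ⟨w, hwz, hw⟩ := Finset.exists_ne_zero_of_sum_ne_zero hz
        simp only [U, Finset.coe_filter, Finset.mem_biUnion, Set.mem_ofPred_eq, mem_neighborFinset]
        exact ⟨⟨w, hs hw, ((G.mem_neighborFinset z w).mp hwz).symm⟩, hzS⟩
    _ = ∑ z ∈ U, ∑ w ∈ G.neighborFinset z with w ∈ s, a w := by
        exact Finset.sum_congr rfl fun z _ => (Finset.sum_filter_of_ne fun w _ => hs).symm
    _ = ∑ w ∈ s with w ∈ T, ∑ z ∈ G.neighborFinset w, a w := by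
        refine Finset.sum_comm' fun z w => ?_
        simp only [U, Finset.mem_filter, Finset.mem_biUnion, mem_neighborFinset]
        constructor
        · rintro ⟨⟨_, hzS⟩, hzw, hws⟩
          exact ⟨hzw.symm, hws, hT hzS hzw⟩
        · rintro ⟨hwz, hws, hwT⟩
          exact ⟨⟨⟨w, hws, hwz⟩, hS hwT hwz.symm⟩, hwz.symm, hws⟩
    _ = ∑ w ∈ s with w ∈ T, G.degree w * a w := by simp [card_neighborFinset_eq_degree]
    _ = ∑ᶠ w ∈ T, G.degree w * a w := by
        refine (finsum_mem_eq_sum_of_subset _ (fun w ⟨hwT, hw⟩ => ?_) fun w hw => ?_).symm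
        · exact (Finset.mem_filter.mp hw).2
        · exact Finset.mem_filter.mpr ⟨hs (right_ne_zero_of_mul hw), hwT⟩

lemma IsBipartiteWith.finsum_mem_reflectOn {S T : Set V} {k : ℕ} (h : G.IsBipartiteWith S T)
    (hreg : G.IsRegularOfDegree k) {a : V → ℤ} (ha : a.HasFiniteSupport) :
    ∑ᶠ z ∈ S, G.reflectOn S a z = k * ∑ᶠ z ∈ T, a z - ∑ᶠ z ∈ S, a z := by
  have hsum : ∑ᶠ z ∈ S, G.reflectOn S a z + ∑ᶠ z ∈ S, a z
      = ∑ᶠ z ∈ S, ∑ᶠ w ∈ G.neighborSet z, a w := by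
    rw [← finsum_mem_add_distrib'
      ((hasFiniteSupport_reflectOn S ha).subset Set.inter_subset_right)
      (ha.subset Set.inter_subset_right)]
    exact finsum_mem_congr rfl fun z hz => by simp [reflectOn, hz]
  rw [h.finsum_mem_finsum_mem_neighborSet ha] at hsum
  simp_rw [hreg.degree_eq, ← mul_finsum_mem] at hsum
  linarith

end LocallyFinite

def parityClass (G : SimpleGraph V) (x : V) (n : ℕ) : Set V :=
  {z | G.dist x z % 2 = n % 2}

lemma parityClass_add_two (x : V) (n : ℕ) : G.parityClass x (n + 2) = G.parityClass x n := by
  simp [parityClass]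

lemma disjoint_parityClass_succ (x : V) (n : ℕ) :
    Disjoint (G.parityClass x (n + 1)) (G.parityClass x n) :=
  Set.disjoint_left.mpr fun z hz hz' => by
    simp only [parityClass, Set.mem_ofPred_eq] at hz hz'
    omega

lemma IsTree.isBipartiteWith_parityClass (hG : G.IsTree) (x : V) (n : ℕ) :
    G.IsBipartiteWith (G.parityClass x (n + 1)) (G.parityClass x n) where
  disjoint := disjoint_parityClass_succ x n
  mem_of_adj z w hzw := by
    simp only [parityClass, Set.mem_ofPred_eq]
    rcases hG.dist_eq_dist_add_one_of_adj x hzw with h | h <;> omega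

end SimpleGraph

section sVec

variable {V : Type*} {G : SimpleGraph V}

lemma sVec_succ (x : V) (t : ℕ) :
    sVec G x (t + 1) = G.reflectOn (G.parityClass x (t + 1)) (sVec G x t) := by
  ext z
  rcases Nat.even_or_odd t with ht | ht
  · simp [sVec, ht, phiOdd, SimpleGraph.reflectOn, SimpleGraph.parityClass, Nat.odd_iff,
      Nat.even_iff.mp ht, Nat.add_mod]
  · simp [sVec, phiEven, SimpleGraph.reflectOn, SimpleGraph.parityClass, Nat.even_iff,
      Nat.odd_iff.mp ht, Nat.add_mod]

lemma finsum_mem_sVec_zero (x : V) (S : Set V) :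
    ∑ᶠ z ∈ S, sVec G x 0 z = if x ∈ S then 1 else 0 := by
  split_ifs with hx
  · rw [finsum_mem_eq_sum_of_subset _ (t := {x}) (fun z hz => by simpa [sVec] using hz.2)
      (by simpa using hx)]
    simp [sVec]
  · exact finsum_mem_of_eqOn_zero fun z hz => if_neg (ne_of_mem_of_not_mem hz hx)

lemma hasFiniteSupport_sVec [G.LocallyFinite] (x : V) (t : ℕ) :
    (sVec G x t).HasFiniteSupport := by
  induction t with
  | zero => exact (Set.finite_singleton x).subset fun z hz => by simpa [sVec] using hz
  | succ t ih => rw [sVec_succ]; exact G.hasFiniteSupport_reflectOn _ ih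

lemma finsum_mem_parityClass_sVec_succ [G.LocallyFinite] (hG : G.IsTree)
    (hreg : G.IsRegularOfDegree 3) (x : V) (t : ℕ) :
    ∑ᶠ z ∈ G.parityClass x (t + 1), sVec G x (t + 1) z
      = 3 * ∑ᶠ z ∈ G.parityClass x t, sVec G x t z
        - ∑ᶠ z ∈ G.parityClass x (t + 1), sVec G x t z := by
  rw [sVec_succ]
  exact (hG.isBipartiteWith_parityClass x t).finsum_mem_reflectOn hreg (hasFiniteSupport_sVec x t)

lemma finsum_mem_parityClass_add_two_sVec_succ (x : V) (t : ℕ) :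
    ∑ᶠ z ∈ G.parityClass x (t + 2), sVec G x (t + 1) z
      = ∑ᶠ z ∈ G.parityClass x t, sVec G x t z := by
  rw [sVec_succ, SimpleGraph.parityClass_add_two]
  exact SimpleGraph.finsum_mem_reflectOn_of_disjoint (SimpleGraph.disjoint_parityClass_succ x t) _

end sVec

lemma add_four_eq_of_fib_rec {f : ℤ → ℤ} (hrec : ∀ n, f (n + 1) = f n + f (n - 1))
    (n : ℤ) :
    f (n + 4) = 3 * f (n + 2) - f n := by
  have h2 := hrec (n + 1)
  have h3 := hrec (n + 2)
  have h4 := hrec (n + 3)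
  ring_nf at h2 h3 h4 ⊢
  linarith

lemma eq_fib_two_mul_of_rec {f : ℤ → ℤ} (h0 : f 0 = 0) (h1 : f 1 = 1)
    (hrec : ∀ n, f (n + 1) = f n + f (n - 1)) {u v : ℕ → ℤ} (hu0 : u 0 = 1) (hv0 : v 0 = 0)
    (hu : ∀ t, u (t + 1) = 3 * u t - v t) (hv : ∀ t, v (t + 1) = u t) (t : ℕ) :
    u t = f (2 * t + 2) ∧ v t = f (2 * t) := by
  induction t with
  | zero =>
    have h2 := hrec 1
    norm_num [h0, h1] at h2
    simp [hu0, hv0, h0, h2]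
  | succ t ih =>
    rw [hu, hv, ih.1, ih.2]
    push_cast
    constructor
    · rw [show 2 * ((t : ℤ) + 1) + 2 = 2 * t + 4 by ring, add_four_eq_of_fib_rec hrec]
    · ring_nf

/-- The sum of the coordinates `s_t(x)(z)` over all vertices `z` with
`d(x,z) ≡ t (mod 2)` equals the Fibonacci number `f (2t+2)`, where `f` is the extended
Fibonacci sequence. -/
theorem sVec_sum_eq_parity (f : ℤ → ℤ) (h0 : f 0 = 0) (h1 : f 1 = 1)
    (hrec : ∀ n : ℤ, f (n + 1) = f n + f (n - 1))
    (V : Type*) (G : SimpleGraph V) (hconn : G.Connected)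
    (hacyc : G.IsAcyclic) (hreg : ∀ v : V, (G.neighborSet v).ncard = 3)
    (x : V) (t : ℕ) :
    ∑ᶠ z ∈ {z : V | G.dist x z % 2 = t % 2}, sVec G x t z = f (2 * t + 2) := by
  have hfin (v : V) : (G.neighborSet v).Finite :=
    Set.finite_of_ncard_ne_zero (by rw [hreg v]; norm_num)
  let : G.LocallyFinite := fun v => (hfin v).fintype
  have hdeg : G.IsRegularOfDegree 3 := fun v => by
    rw [← hreg v, Set.ncard_eq_toFinset_card']
    rfl
  have hG : G.IsTree := ⟨hconn, hacyc⟩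
  exact (eq_fib_two_mul_of_rec h0 h1 hrec
    (u := fun t => ∑ᶠ z ∈ G.parityClass x t, sVec G x t z)
    (v := fun t => ∑ᶠ z ∈ G.parityClass x (t + 1), sVec G x t z)
    (by rw [finsum_mem_sVec_zero, if_pos (by simp [SimpleGraph.parityClass])])
    (by rw [finsum_mem_sVec_zero, if_neg (by simp [SimpleGraph.parityClass])])
    (finsum_mem_parityClass_sVec_succ hG hdeg x) (finsum_mem_parityClass_add_two_sVec_succ x) t).1
end
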